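/- Given a Hom-entwining structure [(A,α),(C,γ)]_ψ, the k-module A⊗C with automorphism α⊗γ is an (A,α)-Hom-bimodule via a(a'⊗c)=α^{-1}(a)a'⊗γ(c) and (a'⊗c)a=a'α^{-1}(a)_κ⊗γ(c^κ), and it is an (A,α)-Hom-coring with comultiplication Δ(a⊗c)=(α^{-1}(a)⊗c_1)⊗_A(1⊗c_2) and counit ε(a⊗c)=α(a)ε_C(c). -/
import Mathlib


open TensorProduct

namespace HomPaper

variable {k : Type*} [CommRing k]
variable {A C V : Type*}
variable [AddCommGroup A] [Module k A] [AddCommGroup C] [Module k C]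
variable [AddCommGroup V] [Module k V]

/-- Monoidal Hom-algebra axioms. -/
def IsHomAlgebra (α : A ≃ₗ[k] A) (mul : A →ₗ[k] A →ₗ[k] A) (one : A) : Prop :=
  (∀ a b c, mul (α a) (mul b c) = mul (mul a b) (α c)) ∧
  (∀ a, mul a one = α a) ∧ (∀ a, mul one a = α a) ∧
  (∀ a b, α (mul a b) = mul (α a) (α b)) ∧ α one = one

/-- Monoidal Hom-coalgebra axioms. -/
def IsHomCoalgebra (γ : C ≃ₗ[k] C) (Δ : C →ₗ[k] C ⊗[k] C) (ε : C →ₗ[k] k) : Prop :=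
  (∀ c, TensorProduct.map γ.symm.toLinearMap Δ (Δ c)
      = TensorProduct.assoc k C C C (TensorProduct.map Δ γ.symm.toLinearMap (Δ c))) ∧
  (∀ c, TensorProduct.lid k C (TensorProduct.map ε LinearMap.id (Δ c)) = γ.symm c) ∧
  (∀ c, TensorProduct.rid k C (TensorProduct.map LinearMap.id ε (Δ c)) = γ.symm c) ∧
  (∀ c, Δ (γ c) = TensorProduct.map γ.toLinearMap γ.toLinearMap (Δ c)) ∧
  (∀ c, ε (γ c) = ε c)

/-- Hom-entwining structure axioms for ψ : C ⊗ A → A ⊗ C, ψ(c⊗a) = a_κ ⊗ c^κ. -/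
def IsHomEntwining (α : A ≃ₗ[k] A) (γ : C ≃ₗ[k] C) (mul : A →ₗ[k] A →ₗ[k] A) (one : A)
    (Δ : C →ₗ[k] C ⊗[k] C) (ε : C →ₗ[k] k) (ψ : C ⊗[k] A →ₗ[k] A ⊗[k] C) : Prop :=
  -- (aa')_κ ⊗ γ(c)^κ = a_κ a'_λ ⊗ γ(c^{κλ})
  (∀ c a a', ψ (γ c ⊗ₜ mul a a')
      = TensorProduct.map (TensorProduct.lift mul) γ.toLinearMap
          ((TensorProduct.assoc k A A C).symm
            (TensorProduct.map LinearMap.id ψ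
              (TensorProduct.assoc k A C A (ψ (c ⊗ₜ a) ⊗ₜ a'))))) ∧
  -- α⁻¹(a_κ) ⊗ c^κ₁ ⊗ c^κ₂ = α⁻¹(a)_{κλ} ⊗ c₁^λ ⊗ c₂^κ
  (∀ c a, TensorProduct.map α.symm.toLinearMap Δ (ψ (c ⊗ₜ a))
      = TensorProduct.assoc k A C C
          (TensorProduct.map ψ LinearMap.id
            ((TensorProduct.assoc k C A C).symm
              (TensorProduct.map LinearMap.id ψ
                (TensorProduct.assoc k C C A (Δ c ⊗ₜ α.symm a)))))) ∧
  -- 1_κ ⊗ c^κ = 1 ⊗ c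
  (∀ c, ψ (c ⊗ₜ one) = one ⊗ₜ c) ∧
  -- a_κ ε(c^κ) = a ε(c)
  (∀ c a, TensorProduct.rid k A (TensorProduct.map LinearMap.id ε (ψ (c ⊗ₜ a))) = ε c • a) ∧
  -- ψ is a morphism in the Hom-category
  (∀ c a, ψ (γ c ⊗ₜ α a) = TensorProduct.map α.toLinearMap γ.toLinearMap (ψ (c ⊗ₜ a)))

/-- The relations defining `V ⊗_A V` (on top of base relations `R₀` defining the coring
module as a quotient of `V`). -/
def corRel (R₀ : Submodule k V) (χ : V ≃ₗ[k] V)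
    (lact : A →ₗ[k] V →ₗ[k] V) (ract : V →ₗ[k] A →ₗ[k] V) : Submodule k (V ⊗[k] V) :=
  Submodule.span k
    ({x | ∃ v a w, x = ract v a ⊗ₜ w - χ v ⊗ₜ lact a (χ.symm w)} ∪
     {x | ∃ r w, r ∈ R₀ ∧ (x = r ⊗ₜ w ∨ x = w ⊗ₜ r)})

/-- Induced left A-action on `V ⊗_A V` (on representatives). -/
noncomputable def lact2 (α : A ≃ₗ[k] A) (χ : V ≃ₗ[k] V) (lact : A →ₗ[k] V →ₗ[k] V) (a : A) :
    V ⊗[k] V →ₗ[k] V ⊗[k] V :=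
  TensorProduct.map (lact (α.symm a)) χ.toLinearMap

/-- Induced right A-action on `V ⊗_A V` (on representatives). -/
noncomputable def ract2 (α : A ≃ₗ[k] A) (χ : V ≃ₗ[k] V) (ract : V →ₗ[k] A →ₗ[k] V) (a : A) :
    V ⊗[k] V →ₗ[k] V ⊗[k] V :=
  TensorProduct.map χ.toLinearMap (ract.flip (α.symm a))

/-- The relations defining `V ⊗_A (V ⊗_A V)`. -/
def corRel3 (R₀ : Submodule k V) (α : A ≃ₗ[k] A) (χ : V ≃ₗ[k] V)
    (lact : A →ₗ[k] V →ₗ[k] V) (ract : V →ₗ[k] A →ₗ[k] V) :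
    Submodule k (V ⊗[k] (V ⊗[k] V)) :=
  Submodule.span k
    ({x | ∃ v a w, x = ract v a ⊗ₜ w - χ v ⊗ₜ lact2 α χ lact a w} ∪
     {x | ∃ v w, w ∈ corRel R₀ χ lact ract ∧ x = v ⊗ₜ w} ∪
     {x | ∃ r w, r ∈ R₀ ∧ x = r ⊗ₜ w})

/-- `(V,χ)` (modulo the relations `R₀`) together with the A-bimodule structure
`lact`, `ract`, comultiplication representative `Δ` and counit `ε` is an
`(A,α)`-Hom-coring: all axioms are stated on representatives, under the quotient
projections by `R₀` resp. the tensor-relation submodules. -/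
def IsHomCoring (α : A ≃ₗ[k] A) (mul : A →ₗ[k] A →ₗ[k] A) (one : A)
    (χ : V ≃ₗ[k] V) (lact : A →ₗ[k] V →ₗ[k] V) (ract : V →ₗ[k] A →ₗ[k] V)
    (R₀ : Submodule k V) (Δ : V →ₗ[k] V ⊗[k] V) (ε : V →ₗ[k] A) : Prop :=
  -- (V,χ) is an (A,α)-Hom-bimodule
  (∀ a b v, Submodule.Quotient.mk (p := R₀) (lact (mul a b) (χ v))
      = Submodule.Quotient.mk (p := R₀) (lact (α a) (lact b v))) ∧
  (∀ v, Submodule.Quotient.mk (p := R₀) (lact one v) = Submodule.Quotient.mk (p := R₀) (χ v)) ∧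
  (∀ v a b, Submodule.Quotient.mk (p := R₀) (ract (χ v) (mul a b))
      = Submodule.Quotient.mk (p := R₀) (ract (ract v a) (α b))) ∧
  (∀ v, Submodule.Quotient.mk (p := R₀) (ract v one) = Submodule.Quotient.mk (p := R₀) (χ v)) ∧
  (∀ a v b, Submodule.Quotient.mk (p := R₀) (ract (lact a v) (α b))
      = Submodule.Quotient.mk (p := R₀) (lact (α a) (ract v b))) ∧
  (∀ a v, Submodule.Quotient.mk (p := R₀) (χ (lact a v))
      = Submodule.Quotient.mk (p := R₀) (lact (α a) (χ v))) ∧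
  (∀ v a, Submodule.Quotient.mk (p := R₀) (χ (ract v a))
      = Submodule.Quotient.mk (p := R₀) (ract (χ v) (α a))) ∧
  (∀ r ∈ R₀, χ r ∈ R₀) ∧
  -- Δ and ε are well defined on the quotient by R₀
  (∀ r ∈ R₀, Submodule.Quotient.mk (p := corRel R₀ χ lact ract) (Δ r) = 0) ∧
  (∀ r ∈ R₀, ε r = 0) ∧
  -- A-bilinearity of Δ
  (∀ a v, Submodule.Quotient.mk (p := corRel R₀ χ lact ract) (Δ (lact a v))
      = Submodule.Quotient.mk (p := corRel R₀ χ lact ract) (lact2 α χ lact a (Δ v))) ∧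
  (∀ v a, Submodule.Quotient.mk (p := corRel R₀ χ lact ract) (Δ (ract v a))
      = Submodule.Quotient.mk (p := corRel R₀ χ lact ract) (ract2 α χ ract a (Δ v))) ∧
  -- A-bilinearity of ε
  (∀ a v, ε (lact a v) = mul a (ε v)) ∧
  (∀ v a, ε (ract v a) = mul (ε v) a) ∧
  -- Hom-coassociativity: χ⁻¹(c₁) ⊗ Δ(c₂) = c₁₁ ⊗ (c₁₂ ⊗ χ⁻¹(c₂))
  (∀ v, Submodule.Quotient.mk (p := corRel3 R₀ α χ lact ract)
        (TensorProduct.map χ.symm.toLinearMap Δ (Δ v))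
      = Submodule.Quotient.mk (p := corRel3 R₀ α χ lact ract)
        (TensorProduct.assoc k V V V (TensorProduct.map Δ χ.symm.toLinearMap (Δ v)))) ∧
  -- counity: ε(c₁)c₂ = c = c₁ε(c₂)
  (∀ v, Submodule.Quotient.mk (p := R₀) (TensorProduct.lift (lact ∘ₗ ε) (Δ v))
      = Submodule.Quotient.mk (p := R₀) v) ∧
  (∀ v, Submodule.Quotient.mk (p := R₀) (TensorProduct.lift (ract.compl₂ ε) (Δ v))
      = Submodule.Quotient.mk (p := R₀) v) ∧
  -- compatibility with the twisting maps
  (∀ v, Submodule.Quotient.mk (p := corRel R₀ χ lact ract) (Δ (χ v))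
      = Submodule.Quotient.mk (p := corRel R₀ χ lact ract)
        (TensorProduct.map χ.toLinearMap χ.toLinearMap (Δ v))) ∧
  (∀ v, ε (χ v) = α (ε v))

end HomPaper

namespace HomPaper

variable {k A C : Type*} [CommRing k]
variable [AddCommGroup A] [Module k A] [AddCommGroup C] [Module k C]

/-- Left `(A,α)`-action on `A ⊗ C`: `a(a'⊗c) = α⁻¹(a)a' ⊗ γ(c)`. -/
noncomputable def entwLact (α : A ≃ₗ[k] A) (γ : C ≃ₗ[k] C) (mul : A →ₗ[k] A →ₗ[k] A) :
    A →ₗ[k] (A ⊗[k] C) →ₗ[k] A ⊗[k] C :=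
  TensorProduct.curry
    ((TensorProduct.map
        ((TensorProduct.lift mul) ∘ₗ TensorProduct.map α.symm.toLinearMap LinearMap.id)
        γ.toLinearMap) ∘ₗ (TensorProduct.assoc k A A C).symm.toLinearMap)

/-- Right `(A,α)`-action on `A ⊗ C`: `(a'⊗c)a = a'·α⁻¹(a)_κ ⊗ γ(c^κ)`. -/
noncomputable def entwRact (α : A ≃ₗ[k] A) (γ : C ≃ₗ[k] C) (mul : A →ₗ[k] A →ₗ[k] A)
    (ψ : C ⊗[k] A →ₗ[k] A ⊗[k] C) : (A ⊗[k] C) →ₗ[k] A →ₗ[k] A ⊗[k] C :=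
  TensorProduct.curry
    ((TensorProduct.map (TensorProduct.lift mul) γ.toLinearMap) ∘ₗ
      (TensorProduct.assoc k A A C).symm.toLinearMap ∘ₗ
        (TensorProduct.map LinearMap.id ψ) ∘ₗ
          (TensorProduct.assoc k A C A).toLinearMap ∘ₗ
            (TensorProduct.map LinearMap.id α.symm.toLinearMap))

/-- Comultiplication of the Hom-coring `A ⊗ C`:
`Δ(a⊗c) = (α⁻¹(a)⊗c₁) ⊗ (1⊗c₂)`. -/
noncomputable def entwComul (α : A ≃ₗ[k] A) (one : A) (ΔC : C →ₗ[k] C ⊗[k] C) :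
    (A ⊗[k] C) →ₗ[k] (A ⊗[k] C) ⊗[k] (A ⊗[k] C) :=
  (TensorProduct.map LinearMap.id ((TensorProduct.mk k A C) one)) ∘ₗ
    (TensorProduct.assoc k A C C).symm.toLinearMap ∘ₗ
      (TensorProduct.map α.symm.toLinearMap ΔC)

/-- Counit of the Hom-coring `A ⊗ C`: `ε(a⊗c) = α(a)·ε_C(c)`. -/
noncomputable def entwCounit (α : A ≃ₗ[k] A) (εC : C →ₗ[k] k) :
    (A ⊗[k] C) →ₗ[k] A :=
  α.toLinearMap ∘ₗ (TensorProduct.rid k A).toLinearMap ∘ₗ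
    TensorProduct.map LinearMap.id εC


section Helpers

variable (α : A ≃ₗ[k] A) (mul : A →ₗ[k] A →ₗ[k] A) (one : A)
  (γ : C ≃ₗ[k] C) (ΔC : C →ₗ[k] C ⊗[k] C) (εC : C →ₗ[k] k)
  (ψ : C ⊗[k] A →ₗ[k] A ⊗[k] C)

lemma liftmul_assoc_symm (x : A) (t : A ⊗[k] C) :
    TensorProduct.map (TensorProduct.lift mul) γ.toLinearMap
      ((TensorProduct.assoc k A A C).symm (x ⊗ₜ t))
      = TensorProduct.map (mul x) γ.toLinearMap t := by
  induction t using TensorProduct.induction_on with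
  | zero => simp
  | tmul y c => simp
  | add s t hs ht => simp [tmul_add, hs, ht]

lemma entwLact_tmul (a a' : A) (c : C) :
    entwLact α γ mul a (a' ⊗ₜ c) = mul (α.symm a) a' ⊗ₜ γ c := by
  simp [entwLact]

lemma entwRact_tmul (a' : A) (c : C) (a : A) :
    entwRact α γ mul ψ (a' ⊗ₜ c) a
      = TensorProduct.map (mul a') γ.toLinearMap (ψ (c ⊗ₜ α.symm a)) := by
  simp [entwRact, liftmul_assoc_symm]

lemma mk_assoc_symm (x : A) (t : C ⊗[k] C) :
    TensorProduct.map LinearMap.id ((TensorProduct.mk k A C) one)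
      ((TensorProduct.assoc k A C C).symm (x ⊗ₜ t))
      = TensorProduct.map ((TensorProduct.mk k A C) x) ((TensorProduct.mk k A C) one) t := by
  induction t using TensorProduct.induction_on with
  | zero => simp
  | tmul y c => simp
  | add s t hs ht => simp [tmul_add, hs, ht]

lemma entwComul_tmul (a : A) (c : C) :
    entwComul α one ΔC (a ⊗ₜ c)
      = TensorProduct.map ((TensorProduct.mk k A C) (α.symm a))
          ((TensorProduct.mk k A C) one) (ΔC c) := by
  simp [entwComul, mk_assoc_symm]

lemma entwCounit_tmul (a : A) (c : C) :
    entwCounit α εC (a ⊗ₜ c) = εC c • α a := by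
  simp [entwCounit]

/-- Auxiliary map for right-bilinearity of the comultiplication. -/
noncomputable def Gm (a' : A) : A ⊗[k] (C ⊗[k] C) →ₗ[k] (A ⊗[k] C) ⊗[k] (A ⊗[k] C) :=
  (TensorProduct.map (TensorProduct.map (mul a') γ.toLinearMap)
    ((TensorProduct.mk k A C one) ∘ₗ γ.toLinearMap)) ∘ₗ
    (TensorProduct.assoc k A C C).symm.toLinearMap

lemma Gm_tmul (a' z : A) (f e : C) :
    Gm mul one γ a' (z ⊗ₜ (f ⊗ₜ e)) = (mul a' z ⊗ₜ γ f) ⊗ₜ ((one : A) ⊗ₜ γ e) := by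
  simp [Gm]

lemma Gm_assoc (a' : A) (q : A ⊗[k] C) (e : C) :
    Gm mul one γ a' ((TensorProduct.assoc k A C C) (q ⊗ₜ e))
      = (TensorProduct.map (mul a') γ.toLinearMap q) ⊗ₜ ((one : A) ⊗ₜ γ e) := by
  induction q using TensorProduct.induction_on with
  | zero => simp
  | tmul z f =>
    rw [assoc_tmul, Gm_tmul, map_tmul]
    simp only [LinearEquiv.coe_coe]
  | add s t hs ht => simp [add_tmul, hs, ht]

/-- Auxiliary map for coassociativity. -/
noncomputable def Fm (a : A) :
    C ⊗[k] (C ⊗[k] C) →ₗ[k] (A ⊗[k] C) ⊗[k] ((A ⊗[k] C) ⊗[k] (A ⊗[k] C)) :=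
  TensorProduct.map ((TensorProduct.mk k A C) a)
    (TensorProduct.map ((TensorProduct.mk k A C) one) ((TensorProduct.mk k A C) one))

end Helpers

set_option maxHeartbeats 1000000 in
/-- Given a Hom-entwining structure `[(A,α),(C,γ)]_ψ`, `A ⊗ C` with the
automorphism `α⊗γ` is an `(A,α)`-Hom-bimodule via `a(a'⊗c) = α⁻¹(a)a'⊗γ(c)` and
`(a'⊗c)a = a'α⁻¹(a)_κ⊗γ(c^κ)`, and it is an `(A,α)`-Hom-coring with comultiplication
`Δ(a⊗c) = (α⁻¹(a)⊗c₁)⊗_A(1⊗c₂)` and counit `ε(a⊗c) = α(a)ε_C(c)`. -/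
theorem entwining_homCoring
    (α : A ≃ₗ[k] A) (mul : A →ₗ[k] A →ₗ[k] A) (one : A)
    (γ : C ≃ₗ[k] C) (ΔC : C →ₗ[k] C ⊗[k] C) (εC : C →ₗ[k] k)
    (ψ : C ⊗[k] A →ₗ[k] A ⊗[k] C)
    (hA : IsHomAlgebra α mul one) (hC : IsHomCoalgebra γ ΔC εC)
    (hψ : IsHomEntwining α γ mul one ΔC εC ψ) :
    IsHomCoring α mul one (TensorProduct.congr α γ)
      (entwLact α γ mul) (entwRact α γ mul ψ)
      (⊥ : Submodule k (A ⊗[k] C))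
      (entwComul α one ΔC) (entwCounit α εC) := by
  obtain ⟨hassoc, honeR, honeL, hαmul, hα1⟩ := hA
  obtain ⟨hC1, hC2, hC3, hC4, hC5⟩ := hC
  obtain ⟨hψ1, hψ2, hψ3, hψ4, hψ5⟩ := hψ
  have hα1' : α.symm one = one := by
    conv_lhs => rw [← hα1]
    simp
  have hαmul' : ∀ a b : A, α.symm (mul a b) = mul (α.symm a) (α.symm b) := by
    intro a b
    apply α.injective
    simp [hαmul]
  refine ⟨?_, ?_, ?_, ?_, ?_, ?_, ?_, ?_, ?_, ?_, ?_, ?_, ?_, ?_, ?_, ?_, ?_, ?_, ?_⟩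
  -- 1
  · intro a b v
    refine congrArg _ ?_
    induction v using TensorProduct.induction_on with
    | zero => simp
    | tmul a' c =>
      rw [congr_tmul, entwLact_tmul, entwLact_tmul, entwLact_tmul, hαmul',
          ← hassoc (α.symm a) (α.symm b) a', LinearEquiv.apply_symm_apply,
          LinearEquiv.symm_apply_apply]
    | add u w hu hw => simp [map_add, hu, hw]
  -- 2
  · intro v
    refine congrArg _ ?_
    induction v using TensorProduct.induction_on with
    | zero => simp
    | tmul a' c => rw [entwLact_tmul, congr_tmul, hα1', honeL]
    | add u w hu hw => simp [map_add, hu, hw]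
  -- 3
  · intro v a b
    refine congrArg _ ?_
    induction v using TensorProduct.induction_on with
    | zero => simp
    | tmul a' c =>
      rw [congr_tmul, entwRact_tmul, entwRact_tmul, hαmul', hψ1 c (α.symm a) (α.symm b)]
      generalize ψ (c ⊗ₜ α.symm a) = t
      induction t using TensorProduct.induction_on with
      | zero => simp
      | tmul x d =>
        rw [assoc_tmul, map_tmul, liftmul_assoc_symm, map_tmul, entwRact_tmul,
            LinearEquiv.symm_apply_apply]
        simp only [LinearEquiv.coe_coe, LinearMap.id_coe, id_eq]
        have h5 : ψ (γ d ⊗ₜ b)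
            = TensorProduct.map α.toLinearMap γ.toLinearMap (ψ (d ⊗ₜ α.symm b)) := by
          conv_lhs => rw [← α.apply_symm_apply b]
          rw [hψ5]
        rw [h5]
        generalize ψ (d ⊗ₜ α.symm b) = s
        induction s using TensorProduct.induction_on with
        | zero => simp
        | tmul y e =>
          simp only [map_tmul, LinearEquiv.coe_coe]
          rw [hassoc]
        | add s t hs ht => simp [map_add, hs, ht]
      | add s t hs ht => simp [add_tmul, map_add, LinearMap.add_apply, hs, ht]
    | add u w hu hw => simp [map_add, LinearMap.add_apply, hu, hw]
  -- 4
  · intro v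
    refine congrArg _ ?_
    induction v using TensorProduct.induction_on with
    | zero => simp
    | tmul a' c =>
      rw [entwRact_tmul, hα1', hψ3, map_tmul, honeR, congr_tmul]
      simp only [LinearEquiv.coe_coe]
    | add u w hu hw => simp [map_add, LinearMap.add_apply, hu, hw]
  -- 5
  · intro a v b
    refine congrArg _ ?_
    induction v using TensorProduct.induction_on with
    | zero => simp
    | tmul a' c =>
      rw [entwLact_tmul, entwRact_tmul, entwRact_tmul, LinearEquiv.symm_apply_apply]
      try simp only [LinearEquiv.coe_coe, LinearMap.id_coe, id_eq]
      have h5 : ψ (γ c ⊗ₜ b)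
          = TensorProduct.map α.toLinearMap γ.toLinearMap (ψ (c ⊗ₜ α.symm b)) := by
        conv_lhs => rw [← α.apply_symm_apply b]
        rw [hψ5]
      rw [h5]
      generalize ψ (c ⊗ₜ α.symm b) = s
      induction s using TensorProduct.induction_on with
      | zero => simp
      | tmul y e =>
        simp only [map_tmul, LinearEquiv.coe_coe, entwLact_tmul,
          LinearEquiv.symm_apply_apply]
        rw [← hassoc (α.symm a) a' y, LinearEquiv.apply_symm_apply]
      | add s t hs ht => simp [map_add, hs, ht]
    | add u w hu hw => simp [map_add, LinearMap.add_apply, hu, hw]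
  -- 6
  · intro a v
    refine congrArg _ ?_
    induction v using TensorProduct.induction_on with
    | zero => simp
    | tmul a' c =>
      rw [entwLact_tmul, congr_tmul, congr_tmul, entwLact_tmul, hαmul,
          LinearEquiv.apply_symm_apply, LinearEquiv.symm_apply_apply]
    | add u w hu hw => simp [map_add, hu, hw]
  -- 7
  · intro v a
    refine congrArg _ ?_
    induction v using TensorProduct.induction_on with
    | zero => simp
    | tmul a' c =>
      rw [entwRact_tmul, congr_tmul, entwRact_tmul, LinearEquiv.symm_apply_apply]
      try simp only [LinearEquiv.coe_coe, LinearMap.id_coe, id_eq]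
      have h5 : ψ (γ c ⊗ₜ a)
          = TensorProduct.map α.toLinearMap γ.toLinearMap (ψ (c ⊗ₜ α.symm a)) := by
        conv_lhs => rw [← α.apply_symm_apply a]
        rw [hψ5]
      rw [h5]
      generalize ψ (c ⊗ₜ α.symm a) = s
      induction s using TensorProduct.induction_on with
      | zero => simp
      | tmul y e =>
        simp only [map_tmul, congr_tmul, LinearEquiv.coe_coe]
        rw [hαmul]
      | add s t hs ht => simp [map_add, hs, ht]
    | add u w hu hw => simp [map_add, LinearMap.add_apply, hu, hw]
  -- 8
  · intro r hr
    rw [Submodule.mem_bot] at hr ⊢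
    rw [hr, map_zero]
  -- 9
  · intro r hr
    rw [Submodule.mem_bot] at hr
    rw [hr, map_zero, Submodule.Quotient.mk_zero]
  -- 10
  · intro r hr
    rw [Submodule.mem_bot] at hr
    rw [hr, map_zero]
  -- 11
  · intro a v
    refine congrArg _ ?_
    induction v using TensorProduct.induction_on with
    | zero => simp
    | tmul a' c =>
      rw [entwLact_tmul, entwComul_tmul, entwComul_tmul, hαmul']
      try simp only [LinearEquiv.coe_coe]
      rw [hC4]
      unfold lact2
      generalize ΔC c = u
      induction u using TensorProduct.induction_on with
      | zero => simp
      | tmul c₁ c₂ => simp [entwLact_tmul, congr_tmul, hα1]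
      | add s t hs ht => simp [map_add, hs, ht]
    | add u w hu hw => simp [map_add, hu, hw]
  -- 12
  · intro v a
    rw [Submodule.Quotient.eq]
    induction v using TensorProduct.induction_on with
    | zero => simpa using zero_mem _
    | add u w hu hw =>
      simp only [map_add, LinearMap.add_apply]
      convert add_mem hu hw using 1
      abel
    | tmul a' c =>
      rw [entwRact_tmul]
      have hClaimG : ∀ t : A ⊗[k] C,
          entwComul α one ΔC (TensorProduct.map (mul a') γ.toLinearMap t)
            = Gm mul one γ (α.symm a') (TensorProduct.map α.symm.toLinearMap ΔC t) := by
        intro t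
        induction t using TensorProduct.induction_on with
        | zero => simp
        | tmul x d =>
          rw [map_tmul, entwComul_tmul, hαmul', map_tmul]
          simp only [LinearEquiv.coe_coe]
          rw [hC4]
          generalize ΔC d = u
          induction u using TensorProduct.induction_on with
          | zero => simp
          | tmul e₁ e₂ => simp [Gm_tmul]
          | add s t hs ht => simp [map_add, tmul_add, hs, ht]
        | add s t hs ht => simp [map_add, hs, ht]
      rw [hClaimG, hψ2 c (α.symm a), entwComul_tmul]
      unfold ract2
      generalize ΔC c = u
      induction u using TensorProduct.induction_on with
      | zero => simpa using zero_mem _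
      | add s t hs ht =>
        simp only [add_tmul, map_add, LinearMap.add_apply]
        convert add_mem hs ht using 1
        abel
      | tmul c₁ c₂ =>
        simp only [assoc_tmul, map_tmul, TensorProduct.mk_apply, LinearMap.id_coe, id_eq,
          congr_tmul, LinearEquiv.coe_coe, LinearMap.flip_apply,
          LinearEquiv.apply_symm_apply, entwRact_tmul]
        generalize ψ (c₂ ⊗ₜ α.symm (α.symm a)) = s
        induction s using TensorProduct.induction_on with
        | zero => simpa using zero_mem _
        | add s t hs ht =>
          simp only [tmul_add, map_add, LinearMap.add_apply]
          convert add_mem hs ht using 1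
          abel
        | tmul y e =>
          simp only [assoc_symm_tmul, map_tmul, LinearMap.id_coe, id_eq]
          rw [Gm_assoc]
          have hr : TensorProduct.map (mul (α.symm a')) γ.toLinearMap (ψ (c₁ ⊗ₜ y))
              = entwRact α γ mul ψ (α.symm a' ⊗ₜ c₁) (α y) := by
            rw [entwRact_tmul, LinearEquiv.symm_apply_apply]
          rw [hr]
          apply Submodule.subset_span
          left
          refine ⟨α.symm a' ⊗ₜ c₁, α y, (one : A) ⊗ₜ γ e, ?_⟩
          simp [congr_tmul, congr_symm_tmul, entwLact_tmul, hα1', honeR, honeL,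
            LinearEquiv.symm_apply_apply, LinearEquiv.apply_symm_apply]
  -- 13
  · intro a v
    induction v using TensorProduct.induction_on with
    | zero => simp
    | tmul a' c => simp [entwLact_tmul, entwCounit_tmul, hC5, hαmul]
    | add u w hu hw => simp [map_add, hu, hw]
  -- 14
  · intro v a
    induction v using TensorProduct.induction_on with
    | zero => simp
    | tmul a' c =>
      rw [entwRact_tmul]
      have key : ∀ s : A ⊗[k] C,
          entwCounit α εC (TensorProduct.map (mul a') γ.toLinearMap s)
            = mul (α a') (α ((TensorProduct.rid k A)
                (TensorProduct.map LinearMap.id εC s))) := by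
        intro s
        induction s using TensorProduct.induction_on with
        | zero => simp
        | tmul y e => simp [entwCounit_tmul, hC5, hαmul]
        | add s t hs ht => simp [map_add, hs, ht]
      rw [key, hψ4, entwCounit_tmul]
      simp
    | add u w hu hw => simp [map_add, LinearMap.add_apply, hu, hw]
  -- 15
  · intro v
    refine congrArg _ ?_
    induction v using TensorProduct.induction_on with
    | zero => simp
    | tmul a c =>
      rw [entwComul_tmul]
      have claimA : ∀ u : C ⊗[k] C,
          TensorProduct.map (TensorProduct.congr α γ).symm.toLinearMap (entwComul α one ΔC)
            (TensorProduct.map ((TensorProduct.mk k A C) (α.symm a))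
              ((TensorProduct.mk k A C) one) u)
          = Fm one (α.symm (α.symm a)) (TensorProduct.map γ.symm.toLinearMap ΔC u) := by
        intro u
        induction u using TensorProduct.induction_on with
        | zero => simp
        | tmul c₁ c₂ =>
          simp only [map_tmul, TensorProduct.mk_apply, LinearEquiv.coe_coe]
          rw [congr_symm_tmul, entwComul_tmul, hα1']
          simp [Fm]
        | add s t hs ht => simp [map_add, hs, ht]
      have claimB' : ∀ (w : C ⊗[k] C) (d : C),
          (TensorProduct.assoc k (A ⊗[k] C) (A ⊗[k] C) (A ⊗[k] C))
            ((TensorProduct.map ((TensorProduct.mk k A C) (α.symm (α.symm a)))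
              ((TensorProduct.mk k A C) one) w) ⊗ₜ ((one : A) ⊗ₜ d))
          = Fm one (α.symm (α.symm a)) ((TensorProduct.assoc k C C C) (w ⊗ₜ d)) := by
        intro w d
        induction w using TensorProduct.induction_on with
        | zero => simp
        | tmul x y => simp [Fm]
        | add s t hs ht => simp [add_tmul, hs, ht]
      have claimB : ∀ u : C ⊗[k] C,
          (TensorProduct.assoc k (A ⊗[k] C) (A ⊗[k] C) (A ⊗[k] C))
            (TensorProduct.map (entwComul α one ΔC)
              (TensorProduct.congr α γ).symm.toLinearMap
              (TensorProduct.map ((TensorProduct.mk k A C) (α.symm a))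
                ((TensorProduct.mk k A C) one) u))
          = Fm one (α.symm (α.symm a)) ((TensorProduct.assoc k C C C)
              (TensorProduct.map ΔC γ.symm.toLinearMap u)) := by
        intro u
        induction u using TensorProduct.induction_on with
        | zero => simp
        | tmul c₁ c₂ =>
          simp only [map_tmul, TensorProduct.mk_apply, LinearEquiv.coe_coe]
          rw [congr_symm_tmul, entwComul_tmul, hα1']
          exact claimB' (ΔC c₁) (γ.symm c₂)
        | add s t hs ht => simp [map_add, tmul_add, hs, ht]
      rw [claimA (ΔC c), claimB (ΔC c), hC1 c]
    | add u w hu hw => simp [map_add, hu, hw]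
  -- 16
  · intro v
    refine congrArg _ ?_
    induction v using TensorProduct.induction_on with
    | zero => simp
    | tmul a c =>
      rw [entwComul_tmul]
      have key : ∀ u : C ⊗[k] C,
          TensorProduct.lift (entwLact α γ mul ∘ₗ entwCounit α εC)
            (TensorProduct.map ((TensorProduct.mk k A C) (α.symm a))
              ((TensorProduct.mk k A C) one) u)
          = a ⊗ₜ γ ((TensorProduct.lid k C)
              (TensorProduct.map εC LinearMap.id u)) := by
        intro u
        induction u using TensorProduct.induction_on with
        | zero => simp
        | tmul c₁ c₂ =>
          simp [entwCounit_tmul, entwLact_tmul, honeR, tmul_smul, smul_tmul]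
        | add s t hs ht => simp [map_add, tmul_add, hs, ht]
      rw [key (ΔC c), hC2 c, LinearEquiv.apply_symm_apply]
    | add u w hu hw => simp [map_add, hu, hw]
  -- 17
  · intro v
    refine congrArg _ ?_
    induction v using TensorProduct.induction_on with
    | zero => simp
    | tmul a c =>
      rw [entwComul_tmul]
      have key : ∀ u : C ⊗[k] C,
          TensorProduct.lift ((entwRact α γ mul ψ).compl₂ (entwCounit α εC))
            (TensorProduct.map ((TensorProduct.mk k A C) (α.symm a))
              ((TensorProduct.mk k A C) one) u)
          = a ⊗ₜ γ ((TensorProduct.rid k C)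
              (TensorProduct.map LinearMap.id εC u)) := by
        intro u
        induction u using TensorProduct.induction_on with
        | zero => simp
        | tmul c₁ c₂ =>
          simp only [map_tmul, TensorProduct.mk_apply, TensorProduct.lift.tmul,
            LinearMap.compl₂_apply, entwCounit_tmul, hα1, map_smul,
            LinearMap.id_coe, id_eq, TensorProduct.rid_tmul]
          rw [entwRact_tmul, hα1', hψ3, map_tmul, honeR, LinearEquiv.apply_symm_apply]
          simp [tmul_smul, smul_tmul]
        | add s t hs ht => simp [map_add, tmul_add, hs, ht]
      rw [key (ΔC c), hC3 c, LinearEquiv.apply_symm_apply]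
    | add u w hu hw => simp [map_add, hu, hw]
  -- 18
  · intro v
    refine congrArg _ ?_
    induction v using TensorProduct.induction_on with
    | zero => simp
    | tmul a c =>
      rw [congr_tmul, entwComul_tmul, entwComul_tmul, hC4, LinearEquiv.symm_apply_apply]
      generalize ΔC c = u
      induction u using TensorProduct.induction_on with
      | zero => simp
      | tmul c₁ c₂ => simp [congr_tmul, hα1]
      | add s t hs ht => simp [map_add, hs, ht]
    | add u w hu hw => simp [map_add, hu, hw]
  -- 19
  · intro v
    induction v using TensorProduct.induction_on with
    | zero => simp
    | tmul a c => simp [congr_tmul, entwCounit_tmul, hC5]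
    | add u w hu hw => simp [map_add, hu, hw]


end HomPaper
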